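/- Let n ∈ ℕ, let L ⊆ {0,1}ⁿ be a language all of whose words have length exactly n, and let θ ∈ (0, 2]. Then Isom_θ(L·((01)ⁿ)*) is isomorphic to Isom_θ(L)^ℕ, the direct product of countably many copies of Isom_θ(L), where L·((01)ⁿ)* = {u·(01)^{kn} : u ∈ L, k ∈ ℕ₀}. -/

import Mathlib

/-- Restored from older Mathlib (`Mathlib.Data.List.EditDistance.Defs`), since removed:
a cost structure for edit operations. -/
structure Levenshtein.Cost (α β δ : Type*) where
  /-- Cost to delete an element from a list. -/
  delete : α → δ
  /-- Cost to insert an element into a list. -/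
  insert : β → δ
  /-- Cost to substitute one element for another in a list. -/
  substitute : α → β → δ

/-- Restored from older Mathlib: one step of the dynamic program. -/
def Levenshtein.impl {α β δ : Type*} (C : Levenshtein.Cost α β δ) [Add δ] [Min δ]
    (xs : List α) (y : β) (d : {r : List δ // 0 < r.length}) :
    {r : List δ // 0 < r.length} :=
  let ⟨ds, w⟩ := d
  xs.zip (ds.zip ds.tail) |>.foldr
    (init := ⟨[C.insert y + ds.getLast (List.ne_nil_of_length_pos w)], by simp⟩)
    (fun ⟨x, d₀, d₁⟩ ⟨r, w⟩ =>
      ⟨min (C.delete x + r[0]) (min (C.insert y + d₀) (C.substitute x y + d₁)) :: r, by simp⟩)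

/-- Restored from older Mathlib: Levenshtein distances of all suffixes of `xs` to `ys`. -/
def suffixLevenshtein {α β δ : Type*} (C : Levenshtein.Cost α β δ) [AddZeroClass δ] [Min δ]
    (xs : List α) (ys : List β) : {r : List δ // 0 < r.length} :=
  ys.foldr
    (Levenshtein.impl C xs)
    (xs.foldr (init := ⟨[0], by simp⟩) (fun a ⟨r, w⟩ => ⟨(C.delete a + r[0]) :: r, by simp⟩))

/-- Restored from older Mathlib: the (generalized) Levenshtein distance. -/
def levenshtein {α β δ : Type*} (C : Levenshtein.Cost α β δ) [AddZeroClass δ] [Min δ]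
    (xs : List α) (ys : List β) : δ :=
  let ⟨r, w⟩ := suffixLevenshtein C xs ys
  r[0]

/-- Cost structure for the generalized Levenshtein distance:
insertions and deletions cost `γ`, substitutions cost `θ`. -/
def levCost (A : Type*) [DecidableEq A] (γ θ : ℝ) : Levenshtein.Cost A A ℝ where
  delete _ := γ
  insert _ := γ
  substitute a b := if a = b then 0 else θ

/-- The generalized Levenshtein distance `lev_{γ,θ}` between two words over `A`:
the minimal total cost of transforming one word into the other by insertions and
deletions (of cost `γ`) and substitutions (of cost `θ`). -/
def lev {A : Type*} [DecidableEq A] (γ θ : ℝ) (u v : List A) : ℝ :=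
  levenshtein (levCost A γ θ) u v

/-- The isometry group of a language `L ⊆ A*` with respect to a distance `d` on `A*`:
the group (under composition) of bijections of `L` preserving `d`. -/
def IsomGroup {A : Type*} (d : List A → List A → ℝ) (L : Set (List A)) :
    Subgroup (Equiv.Perm L) where
  carrier := {φ : Equiv.Perm L | ∀ u v : L, d (φ u) (φ v) = d u v}
  one_mem' := by intro u v; rfl
  mul_mem' := by intro φ ψ hφ hψ u v; simp only [Equiv.Perm.mul_apply]; rw [hφ, hψ]
  inv_mem' := by
    intro φ hφ u v
    have h := hφ (φ⁻¹ u) (φ⁻¹ v)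
    simpa using h.symm

/-- The word `(01)ᵏ` over `{0,1}` (with `0 = false`, `1 = true`). -/
def pat (k : ℕ) : List Bool := (List.replicate k [false, true]).flatten

/-!
A word of level `k` in `padded n L = L·((01)ⁿ)*` is `u·(01)^{kn}` with `|u| = n`, and `u` is a
subsequence of `(01)ⁿ`. Hence of two words of different levels the shorter is a subsequence of
the longer, and their distance is `γ` times the length difference. For an isometry `φ`, comparing
`x` with a word `z` such that `z` and `φ z` are both very long gives `|φ z| - |φ x| = |z| - |x|`,
so `φ` shifts all lengths by one constant, which is `0` because the shortest words have length
`n`. Thus `φ` preserves levels, and since `lev (u·p) (v·p) = lev u v` it acts on every level as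
an isometry of `L`. Conversely a family of isometries of `L`, applied levelwise, is an isometry,
because distances across levels only depend on the levels.
-/

theorem List.eq_getElem_zero_cons_tail {α : Type*} {l : List α} (h : 0 < l.length) :
    l = l[0] :: l.tail := by
  cases l
  · simp at h
  · rfl

section Levenshtein

variable {α β δ : Type*} (C : Levenshtein.Cost α β δ) [AddZeroClass δ] [Min δ]

theorem Levenshtein.impl_cons (x : α) (xs : List α) (y : β) (d r : {l : List δ // 0 < l.length})
    (a : δ) (h : d.1 = a :: r.1) :
    (Levenshtein.impl C (x :: xs) y d).1 =
      min (C.delete x + (Levenshtein.impl C xs y r).1[0]'(Levenshtein.impl C xs y r).2)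
        (min (C.insert y + a) (C.substitute x y + r.1[0]'r.2)) ::
        (Levenshtein.impl C xs y r).1 := by
  obtain ⟨_, _⟩ := d
  obtain ⟨_ | ⟨_, _⟩, hr⟩ := r
  · simp at hr
  · subst h; rfl

theorem suffixLevenshtein_cons_left (x : α) (xs : List α) (ys : List β) :
    (suffixLevenshtein C (x :: xs) ys).1 =
      levenshtein C (x :: xs) ys :: (suffixLevenshtein C xs ys).1 := by
  suffices h : (suffixLevenshtein C (x :: xs) ys).1.tail = (suffixLevenshtein C xs ys).1 by
    rw [← h]; exact List.eq_getElem_zero_cons_tail _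
  induction ys with
  | nil => rfl
  | cons y ys ih =>
    have h := List.eq_getElem_zero_cons_tail (suffixLevenshtein C (x :: xs) ys).2
    rw [ih] at h
    exact congrArg List.tail (Levenshtein.impl_cons C x xs y _ _ _ h)

theorem levenshtein_nil_cons (y : β) (ys : List β) :
    levenshtein C ([] : List α) (y :: ys) = C.insert y + levenshtein C [] ys := by
  cases ys <;> rfl

theorem levenshtein_cons_nil (x : α) (xs : List α) :
    levenshtein C (x :: xs) ([] : List β) = C.delete x + levenshtein C xs [] := rfl

theorem levenshtein_cons_cons (x : α) (xs : List α) (y : β) (ys : List β) :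
    levenshtein C (x :: xs) (y :: ys) =
      min (C.delete x + levenshtein C xs (y :: ys))
        (min (C.insert y + levenshtein C (x :: xs) ys)
          (C.substitute x y + levenshtein C xs ys)) := by
  have h := Levenshtein.impl_cons C x xs y _ _ _ (suffixLevenshtein_cons_left C x xs ys)
  change (Levenshtein.impl C (x :: xs) y (suffixLevenshtein C (x :: xs) ys)).1[0]'
    (Levenshtein.impl C (x :: xs) y (suffixLevenshtein C (x :: xs) ys)).2 = _
  simp only [h, List.getElem_cons_zero]
  rfl

end Levenshtein

section Lev

variable {A : Type*} [DecidableEq A] {γ θ : ℝ}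

theorem lev_nil_left (y : List A) : lev γ θ [] y = γ * y.length := by
  induction y with
  | nil => simp [lev, levenshtein]; rfl
  | cons b y ih =>
    rw [lev, levenshtein_nil_cons, ← lev, ih]
    simp [levCost]; ring

theorem lev_nil_right (x : List A) : lev γ θ x [] = γ * x.length := by
  induction x with
  | nil => simp [lev, levenshtein]; rfl
  | cons a x ih =>
    rw [lev, levenshtein_cons_nil, ← lev, ih]
    simp [levCost]; ring

theorem lev_cons_cons (a b : A) (x y : List A) :
    lev γ θ (a :: x) (b :: y) = min (γ + lev γ θ x (b :: y))
      (min (γ + lev γ θ (a :: x) y) ((if a = b then 0 else θ) + lev γ θ x y)) :=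
  levenshtein_cons_cons _ a x b y

theorem lev_comm (x y : List A) : lev γ θ x y = lev γ θ y x := by
  induction x generalizing y with
  | nil => rw [lev_nil_left, lev_nil_right]
  | cons a x ihx =>
    induction y with
    | nil => rw [lev_nil_left, lev_nil_right]
    | cons b y ihy =>
      rw [lev_cons_cons, lev_cons_cons, ihx, ihx, ← ihy, min_left_comm]
      simp only [eq_comm (a := a)]

theorem mul_length_sub_length_le_lev (hγ : 0 ≤ γ) (hθ : 0 ≤ θ) (x y : List A) :
    γ * ((y.length : ℝ) - x.length) ≤ lev γ θ x y := by
  induction x generalizing y with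
  | nil => simp [lev_nil_left]
  | cons a x ihx =>
    induction y with
    | nil =>
      rw [lev_nil_right]
      simp only [List.length_nil, Nat.cast_zero]
      nlinarith [(List.length (a :: x)).cast_nonneg (α := ℝ)]
    | cons b y ihy =>
      have hx := ihx (b :: y)
      have hxy := ihx y
      have hsub : (0 : ℝ) ≤ if a = b then 0 else θ := by split_ifs <;> simp [hθ]
      simp only [List.length_cons, Nat.cast_succ] at *
      rw [lev_cons_cons, le_min_iff, le_min_iff]
      refine ⟨?_, ?_, ?_⟩ <;> nlinarith

theorem lev_cons_right_le (b : A) (x y : List A) : lev γ θ x (b :: y) ≤ γ + lev γ θ x y := by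
  cases x with
  | nil => simp only [lev_nil_left, List.length_cons, Nat.cast_succ]; linarith
  | cons a x => rw [lev_cons_cons]; exact min_le_of_right_le (min_le_left _ _)

theorem List.Sublist.lev_eq (hγ : 0 ≤ γ) (hθ : 0 ≤ θ) {x y : List A} (h : List.Sublist x y) :
    lev γ θ x y = γ * ((y.length : ℝ) - x.length) := by
  refine le_antisymm ?_ (mul_length_sub_length_le_lev hγ hθ x y)
  induction h with
  | slnil => simp [lev_nil_left]
  | cons b _ ih =>
    grw [lev_cons_right_le, ih]
    simp only [List.length_cons, Nat.cast_succ]; linarith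
  | cons_cons a _ ih =>
    rw [lev_cons_cons]
    refine min_le_of_right_le (min_le_of_right_le ?_)
    simpa using ih

theorem lev_append_singleton (hγ : 0 ≤ γ) (hθ : 0 ≤ θ) (c : A) (x y : List A) :
    lev γ θ (x ++ [c]) (y ++ [c]) = lev γ θ x y := by
  have hsingleton : ∀ z : List A, lev γ θ [c] (z ++ [c]) = γ * z.length := fun z => by
    rw [(List.singleton_sublist.2 (List.mem_append_right z (List.mem_singleton_self c))).lev_eq
      hγ hθ]
    simp
  induction x generalizing y with
  | nil => rw [List.nil_append, hsingleton, lev_nil_left]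
  | cons a x ihx =>
    induction y with
    | nil => rw [List.nil_append, lev_comm, hsingleton, lev_nil_right]
    | cons b y ihy =>
      have hx := ihx (b :: y)
      simp only [List.cons_append] at hx ihy ⊢
      rw [lev_cons_cons, lev_cons_cons, hx, ihx, ihy]

theorem lev_append_right_cancel (hγ : 0 ≤ γ) (hθ : 0 ≤ θ) (p x y : List A) :
    lev γ θ (x ++ p) (y ++ p) = lev γ θ x y := by
  induction p using List.reverseRecOn generalizing x y with
  | nil => simp
  | append_singleton p c ih =>
    rw [← List.append_assoc, ← List.append_assoc, lev_append_singleton hγ hθ, ih]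

end Lev

theorem pat_succ (k : ℕ) : pat (k + 1) = false :: true :: pat k := by
  simp [pat, List.replicate_succ]

theorem length_pat (k : ℕ) : (pat k).length = 2 * k := by
  simp [pat, List.length_flatten, mul_comm]

theorem pat_add (a b : ℕ) : pat (a + b) = pat a ++ pat b := by
  rw [pat, pat, pat, List.replicate_add, List.flatten_append]

theorem sublist_pat {w : List Bool} {k : ℕ} (h : w.length ≤ k) : List.Sublist w (pat k) := by
  induction k generalizing w with
  | zero => simp_all
  | succ k ih =>
    rcases w with _ | ⟨a, w⟩
    · exact List.nil_sublist _
    rw [pat_succ]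
    have hw := ih (Nat.le_of_succ_le_succ h)
    cases a
    · exact (hw.cons _).cons_cons _
    · exact (hw.cons_cons _).cons _

theorem append_pat_sublist {n k m : ℕ} {u : List Bool} (hu : u.length = n) (v : List Bool)
    (hkm : k < m) : List.Sublist (u ++ pat (k * n)) (v ++ pat (m * n)) := by
  obtain ⟨j, rfl⟩ := Nat.exists_eq_add_of_lt hkm
  have hm : (k + j + 1) * n = j * n + (n + k * n) := by ring
  rw [hm, pat_add, pat_add, ← List.append_assoc]
  exact ((sublist_pat hu.le).append_right _).trans (List.sublist_append_right _ _)

theorem List.tendsto_length_cofinite {α : Type*} [Finite α] :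
    Filter.Tendsto (List.length : List α → ℕ) Filter.cofinite Filter.atTop :=
  Filter.tendsto_atTop.2 fun b => by
    simpa [Filter.eventually_cofinite] using List.finite_length_lt α b

def padded (n : ℕ) (L : Set (List Bool)) : Set (List Bool) :=
  {w | ∃ u ∈ L, ∃ k : ℕ, w = u ++ pat (k * n)}

section Padded

variable {γ θ : ℝ} {n : ℕ} {L : Set (List Bool)}

theorem length_append_pat {u : List Bool} (hu : u.length = n) (k : ℕ) :
    (u ++ pat (k * n)).length = n + 2 * (k * n) := by
  simp [length_pat, hu]

theorem lev_eq_of_length_lt (hγ : 0 ≤ γ) (hθ : 0 ≤ θ) (hL : ∀ w ∈ L, w.length = n)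
    {x y : List Bool} (hx : x ∈ padded n L) (hy : y ∈ padded n L) (h : x.length < y.length) :
    lev γ θ x y = γ * ((y.length : ℝ) - x.length) := by
  obtain ⟨u, hu, k, rfl⟩ := hx
  obtain ⟨v, hv, m, rfl⟩ := hy
  rw [length_append_pat (hL u hu), length_append_pat (hL v hv)] at h
  exact (append_pat_sublist (hL u hu) v (Nat.lt_of_mul_lt_mul_right (a := n) (by omega))).lev_eq
    hγ hθ

theorem lev_eq_of_length_ne (hγ : 0 ≤ γ) (hθ : 0 ≤ θ) (hL : ∀ w ∈ L, w.length = n)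
    {x y : List Bool} (hx : x ∈ padded n L) (hy : y ∈ padded n L) (h : x.length ≠ y.length) :
    lev γ θ x y = γ * |(x.length : ℝ) - y.length| := by
  rcases h.lt_or_gt with h | h
  · rw [lev_eq_of_length_lt hγ hθ hL hx hy h, abs_sub_comm,
      abs_of_pos (sub_pos.2 (by exact_mod_cast h))]
  · rw [lev_comm, lev_eq_of_length_lt hγ hθ hL hy hx h,
      abs_of_pos (sub_pos.2 (by exact_mod_cast h))]

theorem exists_length_gt_of_perm (hn : 0 < n) (φ : Equiv.Perm (padded n L)) (x : padded n L)
    (B : ℕ) : ∃ z : padded n L, B < z.1.length ∧ B < (φ z).1.length := by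
  obtain ⟨u, hu, -⟩ := x.2
  let g : ℕ → padded n L := fun j => ⟨u ++ pat (j * n), u, hu, j, rfl⟩
  have hg : Function.Injective g := fun i j hij => by
    have := congrArg (fun z : padded n L => z.1.length) hij
    simp only [g, List.length_append, length_pat] at this
    exact Nat.eq_of_mul_eq_mul_right hn (by omega)
  have hlen : ∀ f : ℕ → padded n L, Function.Injective f →
      Filter.Tendsto (fun j => (f j).1.length) Filter.atTop Filter.atTop := fun f hf =>
    Nat.cofinite_eq_atTop ▸
      List.tendsto_length_cofinite.comp (Subtype.val_injective.comp hf).tendsto_cofinite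
  obtain ⟨j, hj⟩ := (((hlen g hg).eventually_gt_atTop B).and
    ((hlen _ (φ.injective.comp hg)).eventually_gt_atTop B)).exists
  exact ⟨g j, hj⟩

theorem length_add_length_eq_of_mem_isomGroup (hγ : 0 < γ) (hθ : 0 ≤ θ) (hn : 0 < n)
    (hL : ∀ w ∈ L, w.length = n) {φ : Equiv.Perm (padded n L)}
    (hφ : φ ∈ IsomGroup (lev γ θ) (padded n L)) (x y : padded n L) :
    (φ x).1.length + y.1.length = x.1.length + (φ y).1.length := by
  obtain ⟨z, hz, hφz⟩ := exists_length_gt_of_perm hn φ x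
    (x.1.length + y.1.length + (φ x).1.length + (φ y).1.length)
  have shift : ∀ w : padded n L, w.1.length < z.1.length → (φ w).1.length < (φ z).1.length →
      ((φ z).1.length : ℝ) - (φ w).1.length = z.1.length - w.1.length := fun w hw hφw => by
    have h := hφ w z
    rw [lev_eq_of_length_lt hγ.le hθ hL (φ w).2 (φ z).2 hφw,
      lev_eq_of_length_lt hγ.le hθ hL w.2 z.2 hw] at h
    exact mul_left_cancel₀ hγ.ne' h
  have hx := shift x (by omega) (by omega)
  have hy := shift y (by omega) (by omega)
  exact_mod_cast (by linarith : ((φ x).1.length : ℝ) + y.1.length = x.1.length + (φ y).1.length)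

theorem le_length_of_mem_padded (hL : ∀ w ∈ L, w.length = n) {w : List Bool}
    (hw : w ∈ padded n L) : n ≤ w.length := by
  obtain ⟨u, hu, k, rfl⟩ := hw
  rw [length_append_pat (hL u hu)]
  omega

theorem length_le_length_apply_of_mem_isomGroup (hγ : 0 < γ) (hθ : 0 ≤ θ) (hn : 0 < n)
    (hL : ∀ w ∈ L, w.length = n) {φ : Equiv.Perm (padded n L)}
    (hφ : φ ∈ IsomGroup (lev γ θ) (padded n L)) (x : padded n L) :
    x.1.length ≤ (φ x).1.length := by
  obtain ⟨u, hu, -⟩ := x.2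
  have h := length_add_length_eq_of_mem_isomGroup hγ hθ hn hL hφ x ⟨u, u, hu, 0, by simp [pat]⟩
  have hφu := le_length_of_mem_padded hL (φ ⟨u, u, hu, 0, by simp [pat]⟩).2
  simp only [hL u hu] at h
  omega

theorem length_apply_of_mem_isomGroup (hγ : 0 < γ) (hθ : 0 ≤ θ) (hn : 0 < n)
    (hL : ∀ w ∈ L, w.length = n) {φ : Equiv.Perm (padded n L)}
    (hφ : φ ∈ IsomGroup (lev γ θ) (padded n L)) (x : padded n L) :
    (φ x).1.length = x.1.length := by
  refine le_antisymm ?_ (length_le_length_apply_of_mem_isomGroup hγ hθ hn hL hφ x)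
  simpa using length_le_length_apply_of_mem_isomGroup hγ hθ hn hL (inv_mem hφ) (φ x)

noncomputable def levelEquiv (hn : 0 < n) (hL : ∀ w ∈ L, w.length = n) : ℕ × L ≃ padded n L :=
  Equiv.ofBijective (fun p => ⟨p.2.1 ++ pat (p.1 * n), p.2.1, p.2.2, p.1, rfl⟩) <| by
    refine ⟨fun ⟨k, u, hu⟩ ⟨m, v, hv⟩ h => ?_,
      fun ⟨_, u, hu, k, hw⟩ => ⟨(k, ⟨u, hu⟩), by simp [hw]⟩⟩
    have h : u ++ pat (k * n) = v ++ pat (m * n) := congrArg Subtype.val h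
    have hkm : k = m := by
      have := congrArg List.length h
      rw [length_append_pat (hL u hu), length_append_pat (hL v hv)] at this
      exact Nat.eq_of_mul_eq_mul_right hn (by omega)
    subst hkm
    simp [List.append_cancel_right h]

theorem length_levelEquiv (hn : 0 < n) (hL : ∀ w ∈ L, w.length = n) (p : ℕ × L) :
    (levelEquiv hn hL p).1.length = n + 2 * (p.1 * n) :=
  length_append_pat (hL _ p.2.2) p.1

theorem lev_levelEquiv_levelEquiv (hγ : 0 ≤ γ) (hθ : 0 ≤ θ) (hn : 0 < n)
    (hL : ∀ w ∈ L, w.length = n) (k : ℕ) (u v : L) :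
    lev γ θ (levelEquiv hn hL (k, u)).1 (levelEquiv hn hL (k, v)).1 = lev γ θ u.1 v.1 :=
  lev_append_right_cancel hγ hθ _ _ _

theorem fst_levelEquiv_symm_apply_of_mem_isomGroup (hγ : 0 < γ) (hθ : 0 ≤ θ) (hn : 0 < n)
    (hL : ∀ w ∈ L, w.length = n) {φ : Equiv.Perm (padded n L)}
    (hφ : φ ∈ IsomGroup (lev γ θ) (padded n L)) (p : ℕ × L) :
    ((levelEquiv hn hL).symm (φ (levelEquiv hn hL p))).1 = p.1 := by
  have h := length_apply_of_mem_isomGroup hγ hθ hn hL hφ (levelEquiv hn hL p)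
  rw [← (levelEquiv hn hL).apply_symm_apply (φ _), length_levelEquiv, length_levelEquiv] at h
  exact Nat.eq_of_mul_eq_mul_right hn (by omega)

noncomputable def sliceFun (hn : 0 < n) (hL : ∀ w ∈ L, w.length = n)
    (φ : Equiv.Perm (padded n L)) (k : ℕ) (u : L) : L :=
  ((levelEquiv hn hL).symm (φ (levelEquiv hn hL (k, u)))).2

theorem levelEquiv_sliceFun (hγ : 0 < γ) (hθ : 0 ≤ θ) (hn : 0 < n)
    (hL : ∀ w ∈ L, w.length = n) {φ : Equiv.Perm (padded n L)}
    (hφ : φ ∈ IsomGroup (lev γ θ) (padded n L)) (k : ℕ) (u : L) :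
    levelEquiv hn hL (k, sliceFun hn hL φ k u) = φ (levelEquiv hn hL (k, u)) := by
  rw [← (levelEquiv hn hL).apply_symm_apply (φ _)]
  congr 1
  exact Prod.ext (fst_levelEquiv_symm_apply_of_mem_isomGroup hγ hθ hn hL hφ (k, u)).symm rfl

theorem sliceFun_one (hn : 0 < n) (hL : ∀ w ∈ L, w.length = n) (k : ℕ) (u : L) :
    sliceFun hn hL 1 k u = u := by
  simp [sliceFun]

theorem sliceFun_mul (hγ : 0 < γ) (hθ : 0 ≤ θ) (hn : 0 < n)
    (hL : ∀ w ∈ L, w.length = n) {φ χ : Equiv.Perm (padded n L)}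
    (hφ : φ ∈ IsomGroup (lev γ θ) (padded n L)) (hχ : χ ∈ IsomGroup (lev γ θ) (padded n L))
    (k : ℕ) (u : L) :
    sliceFun hn hL (φ * χ) k u = sliceFun hn hL φ k (sliceFun hn hL χ k u) := by
  have h : (k, sliceFun hn hL (φ * χ) k u) =
      (k, sliceFun hn hL φ k (sliceFun hn hL χ k u)) := by
    refine (levelEquiv hn hL).injective ?_
    rw [levelEquiv_sliceFun hγ hθ hn hL (mul_mem hφ hχ), levelEquiv_sliceFun hγ hθ hn hL hφ,
      levelEquiv_sliceFun hγ hθ hn hL hχ, Equiv.Perm.mul_apply]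
  exact (Prod.mk.inj h).2

noncomputable def slice (hγ : 0 < γ) (hθ : 0 ≤ θ) (hn : 0 < n) (hL : ∀ w ∈ L, w.length = n)
    (φ : IsomGroup (lev γ θ) (padded n L)) (k : ℕ) : IsomGroup (lev γ θ) L where
  val :=
    { toFun := sliceFun hn hL φ.1 k
      invFun := sliceFun hn hL φ⁻¹.1 k
      left_inv u := by
        rw [← sliceFun_mul hγ hθ hn hL (φ⁻¹).2 φ.2, ← Subgroup.coe_mul, inv_mul_cancel,
          Subgroup.coe_one, sliceFun_one]
      right_inv u := by
        rw [← sliceFun_mul hγ hθ hn hL φ.2 (φ⁻¹).2, ← Subgroup.coe_mul, mul_inv_cancel,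
          Subgroup.coe_one, sliceFun_one] }
  property u v := by
    rw [← lev_levelEquiv_levelEquiv hγ.le hθ hn hL k,
      ← lev_levelEquiv_levelEquiv hγ.le hθ hn hL k]
    simp only [Equiv.coe_fn_mk, levelEquiv_sliceFun hγ hθ hn hL φ.2]
    exact φ.2 _ _

theorem permCongr_prodShear_mem_isomGroup (hγ : 0 ≤ γ) (hθ : 0 ≤ θ) (hn : 0 < n)
    (hL : ∀ w ∈ L, w.length = n) (ψ : ℕ → IsomGroup (lev γ θ) L) :
    (levelEquiv hn hL).permCongr (Equiv.prodShear (Equiv.refl ℕ) fun k => (ψ k).1) ∈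
      IsomGroup (lev γ θ) (padded n L) := by
  intro x y
  obtain ⟨⟨k, u⟩, rfl⟩ := (levelEquiv hn hL).surjective x
  obtain ⟨⟨m, v⟩, rfl⟩ := (levelEquiv hn hL).surjective y
  simp only [Equiv.permCongr_apply, Equiv.symm_apply_apply, Equiv.prodShear_apply,
    Equiv.refl_apply]
  rcases eq_or_ne k m with rfl | hkm
  · rw [lev_levelEquiv_levelEquiv hγ hθ, lev_levelEquiv_levelEquiv hγ hθ]
    exact (ψ k).2 u v
  · have hlen : ∀ u' v' : L,
        (levelEquiv hn hL (k, u')).1.length ≠ (levelEquiv hn hL (m, v')).1.length := by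
      intro u' v' h
      simp only [length_levelEquiv] at h
      exact hkm (Nat.eq_of_mul_eq_mul_right hn (by omega))
    rw [lev_eq_of_length_ne hγ hθ hL (Subtype.prop _) (Subtype.prop _) (hlen _ _),
      lev_eq_of_length_ne hγ hθ hL (Subtype.prop _) (Subtype.prop _) (hlen _ _),
      length_levelEquiv, length_levelEquiv, length_levelEquiv, length_levelEquiv]

noncomputable def isomGroupPaddedEquivPi (hγ : 0 < γ) (hθ : 0 ≤ θ) (hn : 0 < n)
    (hL : ∀ w ∈ L, w.length = n) :
    IsomGroup (lev γ θ) (padded n L) ≃* (ℕ → IsomGroup (lev γ θ) L) where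
  toFun := slice hγ hθ hn hL
  invFun ψ := ⟨_, permCongr_prodShear_mem_isomGroup hγ.le hθ hn hL ψ⟩
  left_inv φ := by
    ext x : 2
    obtain ⟨⟨k, u⟩, rfl⟩ := (levelEquiv hn hL).surjective x
    simp only [Equiv.permCongr_apply, Equiv.symm_apply_apply, Equiv.prodShear_apply,
      Equiv.refl_apply]
    exact levelEquiv_sliceFun hγ hθ hn hL φ.2 k u
  right_inv ψ := by
    ext k u : 3
    simp [slice, sliceFun]
  map_mul' φ χ := by
    ext k u : 3
    exact sliceFun_mul hγ hθ hn hL φ.2 χ.2 k u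

end Padded

theorem padded_zero (L : Set (List Bool)) : padded 0 L = L := by
  ext w
  simp [padded, pat]

/-- For `L ⊆ {0,1}ⁿ` and `θ ∈ (0, 2]`,
`Isom_θ(L·((01)ⁿ)*) ≅ Isom_θ(L)^ℕ`, where
`L·((01)ⁿ)* = {u·(01)^{kn} : u ∈ L, k ∈ ℕ₀}`. -/
theorem stmt_15 (n : ℕ) (L : Set (List Bool)) (hL : ∀ w ∈ L, w.length = n)
    (θ : ℝ) (hθ : θ ∈ Set.Ioc (0 : ℝ) 2) :
    Nonempty (IsomGroup (lev 1 θ) {w | ∃ u ∈ L, ∃ k : ℕ, w = u ++ pat (k * n)} ≃*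
      (ℕ → IsomGroup (lev 1 θ) L)) := by
  rcases Nat.eq_zero_or_pos n with rfl | hn
  · have : Subsingleton L := (Set.subsingleton_coe L).2 fun u hu v hv => by
      rw [List.eq_nil_of_length_eq_zero (hL u hu), List.eq_nil_of_length_eq_zero (hL v hv)]
    have : Unique (IsomGroup (lev 1 θ) L) := uniqueOfSubsingleton 1
    change Nonempty (IsomGroup (lev 1 θ) (padded 0 L) ≃* _)
    rw [padded_zero]
    exact ⟨MulEquiv.ofUnique⟩
  · exact ⟨isomGroupPaddedEquivPi one_pos hθ.1.le hn hL⟩
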